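/- Unique readability of Polish notation for binary trees: if α is in the set P, then either α equals the single-character string a, or there exist unique strings β, γ ∈ P such that α is the concatenation bβγ. -/
import Mathlib


inductive AB | a | b
deriving DecidableEq

inductive P : List AB → Prop
  | base : P [AB.a]
  | step {α β : List AB} : P α → P β → P (AB.b :: (α ++ β))

def wgt : List AB → ℤ :=
  fun l => (l.map fun c => match c with | AB.a => (1 : ℤ) | AB.b => -1).sum

lemma wgt_append (x y : List AB) : wgt (x ++ y) = wgt x + wgt y := by
  simp [wgt]

lemma wgt_P {α : List AB} (h : P α) : wgt α = 1 := by
  induction h with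
  | base => simp [wgt]
  | step hα hβ ihα ihβ =>
      simp only [wgt, List.map_cons, List.map_append, List.sum_cons, List.sum_append] at *
      omega

lemma wgt_prefix {α : List AB} (h : P α) :
    ∀ p s : List AB, α = p ++ s → s ≠ [] → wgt p ≤ 0 := by
  induction h with
  | base =>
      intro p s heq hs
      cases p with
      | nil => simp [wgt]
      | cons x t =>
          simp only [List.cons_append, List.cons.injEq] at heq
          rcases heq with ⟨rfl, heq⟩
          have := List.append_eq_nil_iff.mp heq.symm
          exact absurd this.2 hs
  | @step α β hα hβ ihα ihβ =>
      intro p s heq hs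
      cases p with
      | nil => simp [wgt]
      | cons x t =>
          simp only [List.cons_append, List.cons.injEq] at heq
          rcases heq with ⟨rfl, heq⟩
          have hw : wgt t ≤ 1 := by
            rcases List.append_eq_append_iff.mp heq with ⟨u, hu1, hu2⟩ | ⟨u, hu1, hu2⟩
            · -- t = α ++ u, β = u ++ s
              have : wgt u ≤ 0 := ihβ u s hu2 hs
              rw [hu1, wgt_append, wgt_P hα]; omega
            · -- α = t ++ u, s = u ++ β
              cases u with
              | nil => simp only [List.append_nil] at hu1; rw [← hu1, wgt_P hα]
              | cons y v =>
                  have : wgt t ≤ 0 := ihα t (y :: v) hu1 (by simp)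
                  omega
          simp only [wgt, List.map_cons, List.sum_cons] at *
          omega

lemma P_eq_of_append {β γ β' γ' : List AB} (hβ : P β) (hγ : P γ) (hβ' : P β')
    (hγ' : P γ') (h : β ++ γ = β' ++ γ') : β = β' ∧ γ = γ' := by
  rcases List.append_eq_append_iff.mp h with ⟨u, hu1, hu2⟩ | ⟨u, hu1, hu2⟩
  · -- β' = β ++ u, γ = u ++ γ'
    cases u with
    | nil => simp at hu1 hu2; exact ⟨hu1.symm, hu2⟩
    | cons y v =>
        have h1 := wgt_prefix hβ' β (y :: v) hu1 (by simp)
        rw [wgt_P hβ] at h1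
        omega
  · -- β = β' ++ u, γ' = u ++ γ
    cases u with
    | nil => simp at hu1 hu2; exact ⟨hu1, hu2.symm⟩
    | cons y v =>
        have h1 := wgt_prefix hβ β' (y :: v) hu1 (by simp)
        rw [wgt_P hβ'] at h1
        omega

theorem unique_readability (α : List AB) (h : P α) :
    α = [AB.a] ∨
      ∃! p : List AB × List AB,
        P p.1 ∧ P p.2 ∧ α = AB.b :: (p.1 ++ p.2) := by
  cases h with
  | base => left; rfl
  | @step β γ hβ hγ =>
      right
      refine ⟨(β, γ), ⟨hβ, hγ, rfl⟩, ?_⟩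
      rintro ⟨β', γ'⟩ ⟨hβ', hγ', heq⟩
      simp only [List.cons.injEq] at heq
      obtain ⟨h1, h2⟩ := P_eq_of_append hβ' hγ' hβ hγ heq.2.symm
      exact Prod.ext h1 h2
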